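/- For every R' > 0 there exists a natural number N = N(R'), independent of the point, such that every z ∈ ℍ² belongs to at most N of the rectangles 𝓡_{j,k}(R'), i.e. #{(j,k) ∈ ℤ² : z ∈ 𝓡_{j,k}(R')} ≤ N. -/

import Mathlib

open MeasureTheory Real Set

/- A point `z = (x, y)` of `𝓡_{j,k}(R')` pins down `j` and `k` up to one unit each: since
`3 < 2 ^ 2`, the height satisfies `2 ^ (R' (j - 1)) < y < 2 ^ (R' (j + 1))`, so `j` lies within
distance `1` of `log₂ y / R'`, and then `k` lies within distance `1` of `x / 2 ^ (R' j)`.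
A real window of radius `1` contains at most two integers, so `z` is in at most `2 * 2 = 4`
rectangles. -/

/-- The hyperbolic half-plane, as a subset of `ℝ × ℝ`. -/
def H2 : Set (ℝ × ℝ) := {z | 0 < z.2}

/-- The rectangle `𝓡_{j,k}(R')`. -/
noncomputable def rect (R' : ℝ) (j k : ℤ) : Set (ℝ × ℝ) :=
  {z | |z.1 - (2 : ℝ) ^ (R' * (j : ℝ)) * (k : ℝ)| < (2 : ℝ) ^ (R' * (j : ℝ)) ∧
       (2 : ℝ) ^ (R' * ((j : ℝ) - 1)) < z.2 ∧
       z.2 < (3 : ℝ) ^ R' * (2 : ℝ) ^ (R' * ((j : ℝ) - 1))}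

lemma Int.eq_floor_or_eq_floor_add_one_of_abs_sub_lt_one {α : Type*} [CommRing α] [LinearOrder α]
    [IsStrictOrderedRing α] [FloorRing α] {t : α} {j : ℤ} (h : |(j : α) - t| < 1) :
    j = ⌊t⌋ ∨ j = ⌊t⌋ + 1 := by
  rw [abs_sub_lt_iff] at h
  have hlo : ⌊t⌋ - 1 < j := by
    rw [Int.sub_one_lt_iff, Int.floor_le_iff]
    linarith
  have hhi : j < ⌊t⌋ + 2 := by
    rw [← Int.floor_add_intCast, Int.lt_floor_iff]
    push_cast
    linarith
  omega

section rect

variable {R' : ℝ} {j k : ℤ} {z : ℝ × ℝ}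

lemma rect_height_lt (hR' : 0 < R') (hz : z ∈ rect R' j k) :
    z.2 < (2 : ℝ) ^ (R' * ((j : ℝ) + 1)) :=
  calc z.2 < (3 : ℝ) ^ R' * (2 : ℝ) ^ (R' * ((j : ℝ) - 1)) := hz.2.2
    _ ≤ ((2 : ℝ) ^ (2 : ℝ)) ^ R' * (2 : ℝ) ^ (R' * ((j : ℝ) - 1)) := by
        gcongr
        norm_num
    _ = (2 : ℝ) ^ (R' * ((j : ℝ) + 1)) := by
        rw [← rpow_mul zero_le_two, ← rpow_add two_pos]
        ring_nf

lemma abs_sub_logb_div_lt_one_of_mem_rect (hR' : 0 < R') (hz : z ∈ rect R' j k) :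
    |(j : ℝ) - logb 2 z.2 / R'| < 1 := by
  have hy : 0 < z.2 := (rpow_pos_of_pos two_pos _).trans hz.2.1
  have hlo : R' * ((j : ℝ) - 1) < logb 2 z.2 := (lt_logb_iff_rpow_lt one_lt_two hy).2 hz.2.1
  have hhi : logb 2 z.2 < R' * ((j : ℝ) + 1) :=
    (logb_lt_iff_lt_rpow one_lt_two hy).2 (rect_height_lt hR' hz)
  have hscale : (j : ℝ) - logb 2 z.2 / R' = (R' * j - logb 2 z.2) / R' := by field_simp
  rw [hscale, abs_div, abs_of_pos hR', div_lt_one hR', abs_sub_lt_iff]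
  constructor <;> linarith

lemma abs_sub_div_lt_one_of_mem_rect (hz : z ∈ rect R' j k) :
    |(k : ℝ) - z.1 / (2 : ℝ) ^ (R' * (j : ℝ))| < 1 := by
  have hP : 0 < (2 : ℝ) ^ (R' * (j : ℝ)) := rpow_pos_of_pos two_pos _
  rw [← mul_lt_mul_iff_of_pos_right hP, one_mul, ← abs_of_pos hP, ← abs_mul, abs_of_pos hP,
    sub_mul, div_mul_cancel₀ _ hP.ne', abs_sub_comm, mul_comm]
  exact hz.1

end rect

/-- The covering of the half-plane by the rectangles `𝓡_{j,k}(R')` has bounded overlap: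
there is `N = N(R')` such that every point belongs to at most `N` of the rectangles. -/
theorem rects_bounded_overlap (R' : ℝ) (hR' : 0 < R') :
    ∃ N : ℕ, ∀ z : ℝ × ℝ, z ∈ H2 →
      {p : ℤ × ℤ | z ∈ rect R' p.1 p.2}.encard ≤ N := by
  refine ⟨4, fun z _ => ?_⟩
  set j₀ := ⌊logb 2 z.2 / R'⌋
  set shift : ℤ × ℤ → ℤ × ℤ := fun q => (q.1, ⌊z.1 / (2 : ℝ) ^ (R' * (q.1 : ℝ))⌋ + q.2)
  have hsub : {p : ℤ × ℤ | z ∈ rect R' p.1 p.2} ⊆ shift '' ({j₀, j₀ + 1} ×ˢ {0, 1}) := by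
    rintro ⟨j, k⟩ (hz : z ∈ rect R' j k)
    have hj := Int.eq_floor_or_eq_floor_add_one_of_abs_sub_lt_one
      (abs_sub_logb_div_lt_one_of_mem_rect hR' hz)
    have hk := Int.eq_floor_or_eq_floor_add_one_of_abs_sub_lt_one
      (abs_sub_div_lt_one_of_mem_rect hz)
    refine ⟨(j, k - ⌊z.1 / (2 : ℝ) ^ (R' * (j : ℝ))⌋), ?_, by simp [shift]⟩
    simp only [mem_prod, mem_insert_iff, mem_singleton_iff]
    omega
  calc {p : ℤ × ℤ | z ∈ rect R' p.1 p.2}.encard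
      ≤ (shift '' ({j₀, j₀ + 1} ×ˢ {0, 1})).encard := encard_mono hsub
    _ ≤ (({j₀, j₀ + 1} : Set ℤ) ×ˢ ({0, 1} : Set ℤ)).encard := encard_image_le _ _
    _ = 4 := by
      rw [encard_prod, encard_pair (by omega), encard_pair (by omega)]
      rfl
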